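/- arXiv:2012.09540 — 3 statements merged into one kernel-verified Lean document; each statement's English description precedes it below -/
import Mathlib

section
/- Kravchuk orthogonality: for all k, l ≤ n, ∑_{i=0}^{n} C(n,i) K^n_k(i) K^n_l(i) = 2^n C(n,k) δ_{k=l}, where K^n_k(m) := ∑_{j=0}^{k} (-1)^j C(m,j) C(n-m,k-j). -/
open Finset

/-- The Kravchuk polynomial value K^n_k(m). -/
def krav (n k m : ℕ) : ℤ :=
  ∑ j ∈ range (k + 1), (-1 : ℤ) ^ j * (m.choose j : ℤ) * ((n - m).choose (k - j) : ℤ)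

/-!
Read `m` as the size of a subset `A` of an `n`-element set. Splitting a `k`-set `S` into `S ∩ A`
and `S \ A` shows `K^n_k(#A) = ∑_{#S = k} (-1)^#(S ∩ A)`, and `C(n, i)` counts the `A` with
`#A = i`, so the left side becomes `∑_{#S = k, #T = l} ∑_A (-1)^#(S ∩ A) (-1)^#(T ∩ A)`. The inner
sum is the orthogonality of the characters `A ↦ (-1)^#(S ∩ A)` of `(ℤ/2)^n`: it is `2^n` when
`S = T` and `0` otherwise.
-/

section

variable {α : Type*} [Fintype α] [DecidableEq α]

theorem Finset.card_filter_powersetCard_card_inter_eq (A : Finset α) {j k : ℕ} (hjk : j ≤ k) :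
    #{S ∈ powersetCard k univ | #(S ∩ A) = j} =
      (#A).choose j * (Fintype.card α - #A).choose (k - j) := by
  rw [← card_compl, ← card_powersetCard, ← card_powersetCard, ← card_product]
  refine card_nbij' (fun S => (S ∩ A, S \ A)) (fun p => p.1 ∪ p.2) ?_ ?_ ?_ ?_
  · intro S hS
    simp only [mem_coe, mem_filter, mem_product, mem_powersetCard] at hS ⊢
    have := card_inter_add_card_sdiff S A
    grind [mem_compl]
  · intro p hp
    simp only [mem_coe, mem_product, mem_powersetCard] at hp
    obtain ⟨⟨hBA, hB⟩, hCA, hC⟩ := hp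
    have hBC : (p.1 ∪ p.2) ∩ A = p.1 := by grind [mem_compl]
    simp only [mem_coe, mem_filter, mem_powersetCard_univ]
    rw [card_union_of_disjoint (disjoint_compl_right.mono hBA hCA), hBC]
    omega
  · intro S _
    exact sup_inf_sdiff S A
  · intro p hp
    simp only [mem_coe, mem_product, mem_powersetCard] at hp
    ext1 <;> grind [mem_compl]

theorem krav_card_eq_sum_powersetCard (k : ℕ) (A : Finset α) :
    krav (Fintype.card α) k #A = ∑ S ∈ powersetCard k univ, (-1 : ℤ) ^ #(S ∩ A) := by
  have hmaps : ∀ S ∈ powersetCard k univ, #(S ∩ A) ∈ range (k + 1) := fun S hS => by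
    rw [mem_range, Nat.lt_succ_iff, ← (mem_powersetCard_univ.1 hS)]
    exact card_le_card inter_subset_left
  rw [← sum_fiberwise_of_maps_to hmaps, krav]
  refine sum_congr rfl fun j hj => ?_
  rw [sum_congr rfl fun S hS => by rw [(mem_filter.1 hS).2], sum_const,
    card_filter_powersetCard_card_inter_eq A (Nat.lt_succ_iff.1 (mem_range.1 hj)), nsmul_eq_mul]
  push_cast
  ring

theorem Finset.sum_neg_one_pow_card_inter_mul (S T : Finset α) :
    ∑ A : Finset α, (-1 : ℤ) ^ #(S ∩ A) * (-1) ^ #(T ∩ A) =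
      if S = T then 2 ^ Fintype.card α else 0 := by
  let χ (U : Finset α) (x : α) : ℤ := if x ∈ U then -1 else 1
  have hχ (U A : Finset α) : (-1 : ℤ) ^ #(U ∩ A) = ∏ x ∈ A, χ U x := by
    rw [Finset.prod_ite_mem, prod_const, inter_comm]
  have hfactor (x : α) : 1 + χ S x * χ T x = if (x ∈ S ↔ x ∈ T) then 2 else 0 := by
    grind
  simp_rw [hχ, ← prod_mul_distrib, ← powerset_univ, ← prod_one_add, hfactor]
  split_ifs with hST
  · simp [hST]
  · obtain ⟨x, hx⟩ : ∃ x, ¬(x ∈ S ↔ x ∈ T) := by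
      by_contra! h
      exact hST (ext h)
    exact prod_eq_zero (mem_univ x) (if_neg hx)

end

theorem kravchuk_orthogonality_general (n k l : ℕ) :
    (∑ i ∈ range (n + 1), (n.choose i : ℤ) * krav n k i * krav n l i)
      = 2 ^ n * (n.choose k : ℤ) * (if k = l then 1 else 0) := by
  have hkrav := krav_card_eq_sum_powersetCard (α := Fin n)
  simp only [Fintype.card_fin] at hkrav
  calc ∑ i ∈ range (n + 1), (n.choose i : ℤ) * krav n k i * krav n l i
      = ∑ A : Finset (Fin n), krav n k #A * krav n l #A := by
        rw [← powerset_univ, sum_powerset_apply_card (fun m => krav n k m * krav n l m),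
          card_univ, Fintype.card_fin]
        simp only [nsmul_eq_mul, mul_assoc]
    _ = ∑ S ∈ powersetCard k univ, ∑ T ∈ powersetCard l univ,
          ∑ A : Finset (Fin n), (-1 : ℤ) ^ #(S ∩ A) * (-1) ^ #(T ∩ A) := by
        simp_rw [hkrav, sum_mul_sum]
        rw [sum_comm]
        exact sum_congr rfl fun S _ => sum_comm
    _ = ∑ S ∈ powersetCard k (univ : Finset (Fin n)), if k = l then 2 ^ n else 0 := by
        refine sum_congr rfl fun S hS => ?_
        simp_rw [sum_neg_one_pow_card_inter_mul, Fintype.card_fin, sum_ite_eq,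
          mem_powersetCard_univ, mem_powersetCard_univ.1 hS]
    _ = 2 ^ n * (n.choose k : ℤ) * (if k = l then 1 else 0) := by
        rw [sum_const, card_powersetCard, card_univ, Fintype.card_fin, nsmul_eq_mul]
        split_ifs <;> ring

theorem kravchuk_orthogonality (n k l : ℕ) (hk : k ≤ n) (hl : l ≤ n) :
    (∑ i ∈ range (n + 1), (n.choose i : ℤ) * krav n k i * krav n l i)
      = 2 ^ n * (n.choose k : ℤ) * (if k = l then 1 else 0) :=
  kravchuk_orthogonality_general n k l
end

section
/- For natural numbers k and l with 0 ≤ l ≤ 11 and m = 12k + l, the quantity S'(m) := -m³/6 + 3m²/4 - 5m/6 - (-1)^m/8 satisfies S'(m) - S'(l) ∈ 2ℤ, i.e. S'(m) ≡ S'(l) mod 2. -/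
/-- S'(m) = -m³/6 + 3m²/4 - 5m/6 - (-1)^m/8. -/
def Sprime (m : ℕ) : ℚ :=
  -(m : ℚ) ^ 3 / 6 + 3 * (m : ℚ) ^ 2 / 4 - 5 * (m : ℚ) / 6 - (-1 : ℚ) ^ m / 8

theorem Sprime_add_twelve (m : ℕ) :
    Sprime (m + 12) = Sprime m + 2 * ((-(3 * m ^ 2 + 27 * m + 95) : ℤ) : ℚ) := by
  have hsign : (-1 : ℚ) ^ (m + 12) = (-1 : ℚ) ^ m := by
    rw [pow_add]
    norm_num
  simp only [Sprime, hsign]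
  push_cast
  ring

theorem Sprime_add_twelve_mul (m k : ℕ) :
    ∃ z : ℤ, Sprime (m + 12 * k) - Sprime m = 2 * (z : ℚ) := by
  induction k with
  | zero => exact ⟨0, by simp⟩
  | succ k ih =>
    obtain ⟨z, hz⟩ := ih
    refine ⟨z - (3 * (m + 12 * k : ℕ) ^ 2 + 27 * (m + 12 * k : ℕ) + 95), ?_⟩
    rw [show m + 12 * (k + 1) = m + 12 * k + 12 by ring, Sprime_add_twelve]
    push_cast at hz ⊢
    linear_combination hz

theorem Sprime_period_twelve_general (k l : ℕ) :
    ∃ z : ℤ, Sprime (12 * k + l) - Sprime l = 2 * (z : ℚ) := by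
  rw [add_comm]
  exact Sprime_add_twelve_mul l k

theorem Sprime_period_twelve (k l : ℕ) (hl : l ≤ 11) :
    ∃ z : ℤ, Sprime (12 * k + l) - Sprime l = 2 * (z : ℚ) :=
  Sprime_period_twelve_general k l
end

section
/- With Ŝ(0)=0, Ŝ(1)=(n-2)(n-3)/16, Ŝ(2)=-(n-3)/8, Ŝ(3)=1/8, Ŝ(n)=-1/8 and Ŝ(k)=0 otherwise (n ≥ 4), the inverse Kravchuk transform S(m) := ∑_{k=0}^{n} Ŝ(k) K^n_k(m) equals -m³/6 + 3m²/4 - 5m/6 + n³/48 - n²/8 + 11n/48 - (-1)^m/8 for all 0 ≤ m ≤ n. -/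
/-!
Only `k = 1, 2, 3, n` carry a nonzero coefficient. With `x = n - 2m` the low Kravchuk values are
`K₁ = x`, `K₂ = (x² - n) / 2`, `K₃ = x (x² - 3n + 2) / 6`, and `Kₙ(m) = (-1)^m` because only the
term `j = m` survives; the identity is then polynomial algebra in `m` and `n`.
-/

open Finset

/-- The spider-nest coefficients Ŝ(k) (for n ≥ 4). -/
def Shat (n k : ℕ) : ℚ :=
  if k = 0 then 0
  else if k = 1 then ((n : ℚ) - 2) * ((n : ℚ) - 3) / 16
  else if k = 2 then -((n : ℚ) - 3) / 8
  else if k = 3 then 1 / 8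
  else if k = n then -(1 / 8)
  else 0

theorem Nat.cast_choose_three (K : Type*) [Field K] [CharZero K] (a : ℕ) :
    (a.choose 3 : K) = a * (a - 1) * (a - 2) / 6 := by
  induction a with
  | zero => simp
  | succ a ih =>
    rw [Nat.choose_succ_succ, Nat.cast_add, ih, Nat.cast_choose_two]
    push_cast
    ring

lemma krav_one_eq {n m : ℕ} (hm : m ≤ n) : (krav n 1 m : ℚ) = n - 2 * m := by
  simp only [krav, sum_range_succ, sum_range_zero]
  push_cast [Nat.cast_sub hm, Nat.choose_zero_right, Nat.choose_one_right]
  ring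

lemma krav_two_eq {n m : ℕ} (hm : m ≤ n) :
    (krav n 2 m : ℚ) = ((n - 2 * m) ^ 2 - n) / 2 := by
  simp only [krav, sum_range_succ, sum_range_zero]
  push_cast [Nat.cast_sub hm, Nat.choose_zero_right, Nat.choose_one_right, Nat.cast_choose_two]
  ring

lemma krav_three_eq {n m : ℕ} (hm : m ≤ n) :
    (krav n 3 m : ℚ) = (n - 2 * m) * ((n - 2 * m) ^ 2 - 3 * n + 2) / 6 := by
  simp only [krav, sum_range_succ, sum_range_zero]
  push_cast [Nat.cast_sub hm, Nat.choose_zero_right, Nat.choose_one_right, Nat.cast_choose_two,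
    Nat.cast_choose_three]
  ring

lemma krav_self {n m : ℕ} (hm : m ≤ n) : krav n n m = (-1) ^ m := by
  rw [krav, sum_eq_single_of_mem m (mem_range.2 (by omega))]
  · simp
  · intro j hj hjm
    rcases lt_or_gt_of_ne hjm with h | h
    · rw [Nat.choose_eq_zero_of_lt (by omega : n - m < n - j), Nat.cast_zero, mul_zero]
    · rw [Nat.choose_eq_zero_of_lt h, Nat.cast_zero, mul_zero, zero_mul]

lemma sum_Shat_mul {n : ℕ} (hn : 4 ≤ n) (f : ℕ → ℚ) :
    ∑ k ∈ range (n + 1), Shat n k * f k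
      = (n - 2) * (n - 3) / 16 * f 1 + -(n - 3) / 8 * f 2 + 1 / 8 * f 3 + -(1 / 8) * f n := by
  have hsupp : ∀ k ∈ range (n + 1), k ∉ ({1, 2, 3, n} : Finset ℕ) → Shat n k * f k = 0 := by
    intro k _ hk
    simp only [mem_insert, mem_singleton, not_or] at hk
    obtain ⟨h1, h2, h3, hkn⟩ := hk
    by_cases h0 : k = 0 <;> simp [Shat, *]
  rw [← sum_subset (by intro k; simp; omega) hsupp, sum_insert (by simp; omega),
    sum_insert (by simp; omega), sum_insert (by simp; omega), sum_singleton]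
  simp [Shat, show n ≠ 0 by omega, show n ≠ 1 by omega, show n ≠ 2 by omega, show n ≠ 3 by omega,
    add_assoc]

theorem spider_nest_inverse_kravchuk (n : ℕ) (hn : 4 ≤ n) :
    ∀ m ≤ n,
      (∑ k ∈ range (n + 1), Shat n k * (krav n k m : ℚ))
        = -(m : ℚ) ^ 3 / 6 + 3 * (m : ℚ) ^ 2 / 4 - 5 * (m : ℚ) / 6
          + (n : ℚ) ^ 3 / 48 - (n : ℚ) ^ 2 / 8 + 11 * (n : ℚ) / 48
          - (-1 : ℚ) ^ m / 8 := by
  intro m hm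
  rw [sum_Shat_mul hn, krav_one_eq hm, krav_two_eq hm, krav_three_eq hm, krav_self hm]
  push_cast
  ring
end
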